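/- Work on a probability space with X a random element of a measurable space S, Y, A bounded real random variables, b, p : S → ℝ measurable with b(X) a version of E[Y | σ(X)] and p(X) a version of E[A | σ(X)], and b̂, p̂ : S → ℝ, z̄ : S → ℝᵏ bounded measurable with Ω := E[z̄(X) z̄(X)ᵀ] invertible. Let O₁, O₂, O₃, O₄ be i.i.d. copies of (Y, A, X) and set ε_{b,i} := Yᵢ − b̂(Xᵢ), ε_{p,i} := Aᵢ − p̂(Xᵢ). Then E[ ε_{b,1} z̄(X₁)ᵀ Ω⁻¹ z̄(X₂) ε_{b,2} · ε_{p,3} z̄(X₃)ᵀ Ω⁻¹ z̄(X₄) ε_{p,4} ] = ‖Π[b − b̂]‖² · ‖Π[p − p̂]‖², where Π is the orthogonal projection in L²(law of X) onto the span of z₁, …, z_k. Consequently, for n ≥ 4 i.i.d. copies, the fourth-order U-statistic ÎF₄₄ := ((n−4)!/n!) Σ_{i₁ ≠ i₂ ≠ i₃ ≠ i₄} ε_{b,i₁} z̄(X_{i₁})ᵀ Ω⁻¹ z̄(X_{i₂}) ε_{b,i₂} ε_{p,i₃} z̄(X_{i₃})ᵀ Ω⁻¹ z̄(X_{i₄})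 ε_{p,i₄} is unbiased for ‖Π[b − b̂]‖² ‖Π[p − p̂]‖². -/

import Mathlib

/-!
Write `εᵦ := (Y - b̂(X)) • z̄(X)` and `εₚ := (A - p̂(X)) • z̄(X)`. The first kernel is the bilinear
form `εᵦ(O₁) ⬝ᵥ G⁻¹ *ᵥ εᵦ(O₂)`, so the product of the two kernels is a finite linear combination
of products of functions of the four independent observations, and its expectation is
`(E εᵦ ⬝ᵥ G⁻¹ *ᵥ E εᵦ) · (E εₚ ⬝ᵥ G⁻¹ *ᵥ E εₚ)`. Pulling `z̄(X)` out of `E[· | X]` and using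
`b(X) = E[Y | X]`, the coordinates of `E εᵦ` are the inner products `⟪b - b̂, z_j⟫` in
`L²(law of X)`; since `G` is the Gram matrix of the `z_j`, `v ⬝ᵥ G⁻¹ *ᵥ v` with `v_j = ⟪f, z_j⟫`
is `‖Π f‖²`.

For the U-statistic, `ω ↦ ω ∘ f` preserves the product measure for every injective
`f : Fin 4 → Fin n`, so each of the `n! / (n - 4)!` terms has the expectation computed above.
-/

open MeasureTheory

section

open Function Finset Matrix RealInnerProductSpace

theorem Fintype.sum_fin_four_fun {β M : Type*} [Fintype β] [AddCommMonoid M]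
    (F : (Fin 4 → β) → M) : ∑ f, F f = ∑ a, ∑ b, ∑ c, ∑ d, F ![a, b, c, d] := by
  simp only [← (Fin.consEquiv fun _ => β).sum_comp, Fintype.sum_prod_type, Fintype.sum_unique]
  rfl

theorem injective_vecCons_four_iff {β : Type*} {a b c d : β} :
    Injective ![a, b, c, d] ↔ a ≠ b ∧ a ≠ c ∧ a ≠ d ∧ b ≠ c ∧ b ≠ d ∧ c ≠ d := by
  simp only [Matrix.vecCons, Fin.cons_injective_iff, Fin.range_cons, Matrix.range_empty]
  simp [Function.injective_of_subsingleton]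
  tauto

theorem Fintype.sum_ite_injective_fin_four {β M : Type*} [Fintype β] [DecidableEq β]
    [AddCommMonoid M] (F : (Fin 4 → β) → M) :
    ∑ f, (if Injective f then F f else 0)
      = ∑ a, ∑ b, ∑ c, ∑ d,
          if a ≠ b ∧ a ≠ c ∧ a ≠ d ∧ b ≠ c ∧ b ≠ d ∧ c ≠ d then F ![a, b, c, d] else 0 := by
  simp only [Fintype.sum_fin_four_fun, injective_vecCons_four_iff]

theorem card_filter_injective (κ ι : Type*) [Fintype κ] [Fintype ι] [DecidableEq κ]
    [DecidableEq ι] :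
    #{f : κ → ι | Injective f} = (Fintype.card ι).descFactorial (Fintype.card κ) := by
  rw [← Fintype.card_subtype, Fintype.card_congr (Equiv.subtypeInjectiveEquivEmbedding κ ι),
    Fintype.card_embedding_eq]

theorem measurePreserving_comp_of_injective {ι κ Ω : Type*} [Fintype ι] [Fintype κ]
    [MeasurableSpace Ω] (P : Measure Ω) [IsProbabilityMeasure P] {f : κ → ι}
    (hf : Injective f) :
    MeasurePreserving (fun ω : ι → Ω => ω ∘ f) (Measure.pi fun _ => P)
      (Measure.pi fun _ => P) := by
  classical
  refine ⟨by fun_prop, ?_⟩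
  rw [← Measure.infinitePi_eq_pi, ← Measure.infinitePi_eq_pi]
  refine Measure.eq_infinitePi _ fun s t ht => ?_
  set t' : ι → Set Ω := extend f t fun _ => Set.univ
  have ht' : ∀ j, t' (f j) = t j := fun j => hf.extend_apply _ _ j
  have hpre : (fun ω : ι → Ω => ω ∘ f) ⁻¹' Set.pi s t = Set.pi (s.image f : Finset ι) t' := by
    ext ω
    simp [ht']
  rw [Measure.map_apply (by fun_prop) (.pi s.countable_toSet fun j _ => ht j), hpre,
    Measure.infinitePi_pi _ fun i hi => ?_, Finset.prod_image hf.injOn]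
  · simp [ht']
  · obtain ⟨j, -, rfl⟩ := Finset.mem_image.mp hi
    simpa [ht'] using ht j

theorem integral_comp_of_injective {ι κ Ω : Type*} [Fintype ι] [Fintype κ] [MeasurableSpace Ω]
    (P : Measure Ω) [IsProbabilityMeasure P] {f : κ → ι} (hf : Injective f) {H : (κ → Ω) → ℝ}
    (hH : AEStronglyMeasurable H (Measure.pi fun _ => P)) :
    ∫ ω : ι → Ω, H (ω ∘ f) ∂(Measure.pi fun _ => P) = ∫ ω, H ω ∂(Measure.pi fun _ => P) := by
  have hmp := measurePreserving_comp_of_injective P hf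
  rw [← hmp.map_eq] at hH ⊢
  exact (integral_map hmp.measurable.aemeasurable hH).symm

theorem integral_sum_comp_injective {ι κ Ω : Type*} [Fintype ι] [Fintype κ] [DecidableEq ι]
    [DecidableEq κ] [MeasurableSpace Ω] (P : Measure Ω) [IsProbabilityMeasure P]
    {H : (κ → Ω) → ℝ} (hH : Integrable H (Measure.pi fun _ => P)) :
    ∫ ω : ι → Ω, ∑ f : κ → ι, (if Injective f then H (ω ∘ f) else 0) ∂(Measure.pi fun _ => P)
      = (Fintype.card ι).descFactorial (Fintype.card κ) * ∫ ω, H ω ∂(Measure.pi fun _ => P) := by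
  have hterm : ∀ f : κ → ι, Integrable (fun ω : ι → Ω => if Injective f then H (ω ∘ f) else 0)
      (Measure.pi fun _ => P) := fun f => by
    split_ifs with hf
    exacts [(measurePreserving_comp_of_injective P hf).integrable_comp_of_integrable hH,
      integrable_zero _ _ _]
  calc ∫ ω : ι → Ω, ∑ f : κ → ι, (if Injective f then H (ω ∘ f) else 0) ∂(Measure.pi fun _ => P)
      = ∑ f : κ → ι, if Injective f then ∫ ω, H ω ∂(Measure.pi fun _ => P) else 0 := by
        rw [integral_finsetSum _ fun f _ => hterm f]
        refine sum_congr rfl fun f _ => ?_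
        split_ifs with hf
        exacts [integral_comp_of_injective P hf hH.1, integral_zero _ _]
    _ = _ := by
        rw [sum_ite, sum_const_zero, add_zero, sum_const, card_filter_injective, nsmul_eq_mul]

theorem integral_uStatistic_fin_four {Ω : Type*} [MeasurableSpace Ω] (P : Measure Ω)
    [IsProbabilityMeasure P] {H : (Fin 4 → Ω) → ℝ} (hH : Integrable H (Measure.pi fun _ => P))
    {n : ℕ} (hn : 4 ≤ n) :
    ∫ ω : Fin n → Ω, ((n - 4).factorial : ℝ) / (n.factorial : ℝ) *
        ∑ a, ∑ b, ∑ c, ∑ d,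
          (if a ≠ b ∧ a ≠ c ∧ a ≠ d ∧ b ≠ c ∧ b ≠ d ∧ c ≠ d then H (ω ∘ ![a, b, c, d]) else 0)
        ∂(Measure.pi fun _ => P)
      = ∫ ω, H ω ∂(Measure.pi fun _ => P) := by
  have hU := integral_sum_comp_injective (ι := Fin n) P hH
  simp only [Fintype.sum_ite_injective_fin_four, Fintype.card_fin] at hU
  rw [integral_const_mul, hU, ← mul_assoc, div_mul_eq_mul_div, ← Nat.cast_mul,
    Nat.factorial_mul_descFactorial hn, div_self (by positivity), one_mul]

theorem dotProduct_mulVec_eq_sum_sum {ι R : Type*} [Fintype ι] [CommSemiring R] (x y : ι → R)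
    (M : Matrix ι ι R) : x ⬝ᵥ M *ᵥ y = ∑ a, ∑ c, x a * M a c * y c := by
  simp only [dotProduct, mulVec, mul_sum, mul_assoc]

theorem smul_dotProduct_mulVec_smul {ι R : Type*} [Fintype ι] [CommSemiring R] (s t : R)
    (x y : ι → R) (M : Matrix ι ι R) :
    (s • x) ⬝ᵥ M *ᵥ (t • y) = s * (∑ a, ∑ c, x a * M a c * y c) * t := by
  rw [mulVec_smul, dotProduct_smul, smul_dotProduct, dotProduct_mulVec_eq_sum_sum, smul_eq_mul,
    smul_eq_mul]
  ring

theorem dotProduct_mulVec_mul_dotProduct_mulVec {ι R : Type*} [Fintype ι] [CommSemiring R]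
    (x : Fin 4 → ι → R) (M N : Matrix ι ι R) :
    (x 0 ⬝ᵥ M *ᵥ x 1) * (x 2 ⬝ᵥ N *ᵥ x 3)
      = ∑ a : Fin 4 → ι, M (a 0) (a 1) * N (a 2) (a 3) * ∏ j, x j (a j) := by
  rw [dotProduct_mulVec_eq_sum_sum, dotProduct_mulVec_eq_sum_sum, sum_mul,
    Fintype.sum_fin_four_fun]
  simp_rw [sum_mul]
  simp_rw [mul_sum]
  refine sum_congr rfl fun a _ => sum_congr rfl fun b _ => sum_congr rfl fun c _ =>
    sum_congr rfl fun d _ => ?_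
  simp only [Fin.prod_univ_four, cons_val_zero, cons_val_one, cons_val_two, cons_val_three,
    head_cons, tail_cons]
  ring

theorem integrable_and_integral_pi_dotProduct_mulVec_mul {Ω ι : Type*} [MeasurableSpace Ω]
    [Fintype ι] (P : Measure Ω) [SigmaFinite P] {h q : Ω → ι → ℝ}
    (hh : ∀ a, Integrable (fun ω => h ω a) P) (hq : ∀ a, Integrable (fun ω => q ω a) P)
    (M N : Matrix ι ι ℝ) :
    Integrable (fun ω : Fin 4 → Ω => (h (ω 0) ⬝ᵥ M *ᵥ h (ω 1)) * (q (ω 2) ⬝ᵥ N *ᵥ q (ω 3)))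
        (Measure.pi fun _ => P) ∧
      ∫ ω : Fin 4 → Ω, (h (ω 0) ⬝ᵥ M *ᵥ h (ω 1)) * (q (ω 2) ⬝ᵥ N *ᵥ q (ω 3))
          ∂(Measure.pi fun _ => P)
        = ((fun a => ∫ ω, h ω a ∂P) ⬝ᵥ M *ᵥ fun a => ∫ ω, h ω a ∂P) *
          ((fun a => ∫ ω, q ω a ∂P) ⬝ᵥ N *ᵥ fun a => ∫ ω, q ω a ∂P) := by
  set u : Fin 4 → Ω → ι → ℝ := ![h, h, q, q]
  have hu : ∀ j a, Integrable (fun ω => u j ω a) P := by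
    intro j
    fin_cases j
    exacts [hh, hh, hq, hq]
  have hterm : ∀ a : Fin 4 → ι, Integrable
      (fun ω : Fin 4 → Ω => M (a 0) (a 1) * N (a 2) (a 3) * ∏ j, u j (ω j) (a j))
      (Measure.pi fun _ => P) :=
    fun a => (Integrable.fintype_prod fun j => hu j (a j)).const_mul _
  have hexp : ∀ ω : Fin 4 → Ω, (h (ω 0) ⬝ᵥ M *ᵥ h (ω 1)) * (q (ω 2) ⬝ᵥ N *ᵥ q (ω 3))
      = ∑ a : Fin 4 → ι, M (a 0) (a 1) * N (a 2) (a 3) * ∏ j, u j (ω j) (a j) :=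
    fun ω => dotProduct_mulVec_mul_dotProduct_mulVec (fun j => u j (ω j)) M N
  simp only [hexp]
  refine ⟨integrable_finsetSum _ fun a _ => hterm a, ?_⟩
  rw [integral_finsetSum _ fun a _ => hterm a]
  refine .trans (sum_congr rfl fun a _ => ?_)
    (dotProduct_mulVec_mul_dotProduct_mulVec (fun j a => ∫ ω, u j ω a ∂P) M N).symm
  rw [integral_const_mul, integral_fintype_prod_eq_prod (fun j ω => u j ω (a j))]

theorem norm_orthogonalProjectionOnto_span_sq {E ι : Type*} [NormedAddCommGroup E]
    [InnerProductSpace ℝ E] [Fintype ι] [DecidableEq ι] (e : ι → E) (he : IsUnit (gram ℝ e))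
    [(Submodule.span ℝ (Set.range e)).HasOrthogonalProjection] (f : E) :
    ‖((Submodule.span ℝ (Set.range e)).orthogonalProjectionOnto f : E)‖ ^ 2
      = (fun j => ⟪f, e j⟫) ⬝ᵥ (gram ℝ e)⁻¹ *ᵥ (fun j => ⟪f, e j⟫) := by
  set v : ι → ℝ := fun j => ⟪f, e j⟫
  set c := (gram ℝ e)⁻¹ *ᵥ v
  obtain ⟨u, hu_def⟩ : ∃ u : E, u = ∑ a, c a • e a := ⟨_, rfl⟩
  have hu : ∀ j, ⟪u, e j⟫ = v j := by
    intro j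
    have hGc : gram ℝ e *ᵥ c = v := by
      rw [mulVec_mulVec, mul_nonsing_inv _ ((isUnit_iff_isUnit_det _).mp he), one_mulVec]
    simp only [hu_def, sum_inner, real_inner_smul_left, ← hGc, mulVec, dotProduct, gram_apply]
    exact sum_congr rfl fun a _ => by rw [real_inner_comm, mul_comm]
  have hproj : (Submodule.span ℝ (Set.range e)).starProjection f = u := by
    refine Submodule.eq_starProjection_of_mem_of_inner_eq_zero (hu_def ▸
      Submodule.sum_mem _ fun a _ => Submodule.smul_mem _ _ (Submodule.subset_span ⟨a, rfl⟩))
      fun w hw => ?_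
    induction hw using Submodule.span_induction with
    | mem x hx =>
      obtain ⟨j, rfl⟩ := hx
      rw [inner_sub_left, hu, sub_self]
    | zero => exact inner_zero_right _
    | add x y _ _ hx hy => rw [inner_add_right, hx, hy, add_zero]
    | smul r x _ hx => rw [real_inner_smul_right, hx, mul_zero]
  rw [Submodule.coe_orthogonalProjectionOnto_apply, hproj, ← real_inner_self_eq_norm_sq]
  nth_rw 2 [hu_def]
  simp only [inner_sum, real_inner_smul_right, hu, dotProduct, mul_comm]

theorem inner_toLp_map_eq_integral {Ω S : Type*} [MeasurableSpace Ω] [MeasurableSpace S]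
    {P : Measure Ω} {X : Ω → S} (hX : AEMeasurable X P) {f g : S → ℝ}
    (hf : MemLp f 2 (P.map X)) (hg : MemLp g 2 (P.map X)) :
    ⟪hf.toLp f, hg.toLp g⟫ = ∫ ω, f (X ω) * g (X ω) ∂P := by
  calc ⟪hf.toLp f, hg.toLp g⟫ = ∫ s, f s * g s ∂(P.map X) := by
        rw [L2.inner_def]
        refine integral_congr_ae ?_
        filter_upwards [hf.coeFn_toLp, hg.coeFn_toLp] with s hfs hgs
        simp [hfs, hgs, mul_comm]
    _ = ∫ ω, f (X ω) * g (X ω) ∂P := integral_map hX (hf.1.mul hg.1)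

theorem integrable_sub_mul_of_abs_le {Ω S : Type*} [MeasurableSpace Ω] [MeasurableSpace S]
    {P : Measure Ω} [IsFiniteMeasure P] {X : Ω → S} (hX : Measurable X) {R : Ω → ℝ}
    {r g : S → ℝ} (hR : Measurable R) (hr : Measurable r) (hg : Measurable g) {C : ℝ}
    (hRC : ∀ ω, |R ω| ≤ C) (hrC : ∀ s, |r s| ≤ C) (hgC : ∀ s, |g s| ≤ C) :
    Integrable (fun ω => (R ω - r (X ω)) * g (X ω)) P := by
  refine .of_bound (by fun_prop) ((C + C) * C) (ae_of_all P fun ω => ?_)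
  have hC : 0 ≤ C := (abs_nonneg _).trans (hRC ω)
  rw [Real.norm_eq_abs, abs_mul]
  exact mul_le_mul ((abs_sub _ _).trans (add_le_add (hRC ω) (hrC _))) (hgC _) (abs_nonneg _)
    (by linarith)

theorem integral_sub_mul_eq_inner_toLp {Ω S : Type*} [MeasurableSpace Ω] [MeasurableSpace S]
    {P : Measure Ω} [IsFiniteMeasure P] {X : Ω → S} (hX : Measurable X) {R : Ω → ℝ}
    {b r g : S → ℝ} (hR : Measurable R) (hr : Measurable r) (hg : Measurable g) {C : ℝ}
    (hRC : ∀ ω, |R ω| ≤ C) (hrC : ∀ s, |r s| ≤ C) (hgC : ∀ s, |g s| ≤ C)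
    (hbX : (fun ω => b (X ω)) =ᵐ[P] P[R | MeasurableSpace.comap X inferInstance])
    (hbr : MemLp (fun s => b s - r s) 2 (P.map X)) (hgL : MemLp g 2 (P.map X)) :
    ∫ ω, (R ω - r (X ω)) * g (X ω) ∂P = ⟪hbr.toLp _, hgL.toLp g⟫ := by
  have hm := hX.comap_le
  have hRi : Integrable R P := .of_bound hR.aestronglyMeasurable C (ae_of_all P hRC)
  have hri : Integrable (fun ω => r (X ω)) P :=
    .of_bound (hr.comp hX).aestronglyMeasurable C (ae_of_all P fun ω => hrC _)
  have hcond : P[R - fun ω => r (X ω) | MeasurableSpace.comap X inferInstance]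
      =ᵐ[P] fun ω => b (X ω) - r (X ω) := by
    filter_upwards [condExp_sub hRi hri _, hbX] with ω hsub hb
    rw [hsub, Pi.sub_apply, hb, condExp_of_stronglyMeasurable (f := fun ω => r (X ω)) hm
      (hr.comp (comap_measurable X)).stronglyMeasurable hri]
  have hpull := condExp_stronglyMeasurable_mul_of_bound (f := fun ω => g (X ω)) hm
    (hg.comp (comap_measurable X)).stronglyMeasurable (hRi.sub hri) C
    (ae_of_all P fun ω => hgC (X ω))
  calc ∫ ω, (R ω - r (X ω)) * g (X ω) ∂P
      = ∫ ω, P[(fun ω => g (X ω)) * (R - fun ω => r (X ω)) |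
          MeasurableSpace.comap X inferInstance] ω ∂P := by
        rw [integral_condExp hm]
        simp only [Pi.mul_apply, Pi.sub_apply, mul_comm]
    _ = ∫ ω, (b (X ω) - r (X ω)) * g (X ω) ∂P := by
        refine integral_congr_ae ?_
        filter_upwards [hpull, hcond] with ω h1 h2
        rw [h1, Pi.mul_apply, h2, mul_comm]
    _ = ⟪hbr.toLp _, hgL.toLp g⟫ := (inner_toLp_map_eq_integral hX.aemeasurable hbr hgL).symm

end

theorem stmt12_general {Ω S : Type*} [MeasurableSpace Ω] [MeasurableSpace S]
    (P : Measure Ω) [IsProbabilityMeasure P]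
    (X : Ω → S) (hX : Measurable X)
    (Y A : Ω → ℝ) (hY : Measurable Y) (hA : Measurable A)
    (C : ℝ) (hYb : ∀ ω, |Y ω| ≤ C) (hAb : ∀ ω, |A ω| ≤ C)
    (b p bh ph : S → ℝ)
    (hbh : Measurable bh) (hph : Measurable ph)
    (hbhB : ∀ s, |bh s| ≤ C) (hphB : ∀ s, |ph s| ≤ C)
    (hbX : (fun ω => b (X ω)) =ᵐ[P] P[Y | MeasurableSpace.comap X inferInstance])
    (hpX : (fun ω => p (X ω)) =ᵐ[P] P[A | MeasurableSpace.comap X inferInstance])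
    {k : ℕ} (z : S → Fin k → ℝ) (hz : ∀ j, Measurable fun s => z s j)
    (hzB : ∀ s j, |z s j| ≤ C)
    (G : Matrix (Fin k) (Fin k) ℝ)
    (hG : ∀ i j, G i j = ∫ ω, z (X ω) i * z (X ω) j ∂P)
    (hGinv : IsUnit G)
    (hfb : MemLp (fun s => b s - bh s) 2 (P.map X))
    (hfp : MemLp (fun s => p s - ph s) 2 (P.map X))
    (hzL : ∀ j, MemLp (fun s => z s j) 2 (P.map X))
    (K : Submodule ℝ (Lp ℝ 2 (P.map X)))
    (hK : K = Submodule.span ℝ (Set.range fun j : Fin k => MemLp.toLp _ (hzL j)))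
    [K.HasOrthogonalProjection] :
    ((∫ ω : Fin 4 → Ω,
        (Y (ω 0) - bh (X (ω 0))) *
          (∑ a, ∑ c, z (X (ω 0)) a * G⁻¹ a c * z (X (ω 1)) c) *
          (Y (ω 1) - bh (X (ω 1))) *
          ((A (ω 2) - ph (X (ω 2))) *
            (∑ a, ∑ c, z (X (ω 2)) a * G⁻¹ a c * z (X (ω 3)) c) *
            (A (ω 3) - ph (X (ω 3))))
        ∂(Measure.pi fun _ : Fin 4 => P))
      = ‖(K.orthogonalProjectionOnto (MemLp.toLp _ hfb) : Lp ℝ 2 (P.map X))‖ ^ 2 *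
          ‖(K.orthogonalProjectionOnto (MemLp.toLp _ hfp) : Lp ℝ 2 (P.map X))‖ ^ 2)
    ∧ ∀ n : ℕ, 4 ≤ n →
        (∫ ω : Fin n → Ω,
            ((Nat.factorial (n - 4) : ℝ) / (Nat.factorial n : ℝ)) *
              ∑ i₁ : Fin n, ∑ i₂ : Fin n, ∑ i₃ : Fin n, ∑ i₄ : Fin n,
                (if i₁ ≠ i₂ ∧ i₁ ≠ i₃ ∧ i₁ ≠ i₄ ∧ i₂ ≠ i₃ ∧ i₂ ≠ i₄ ∧ i₃ ≠ i₄ then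
                  (Y (ω i₁) - bh (X (ω i₁))) *
                    (∑ a, ∑ c, z (X (ω i₁)) a * G⁻¹ a c * z (X (ω i₂)) c) *
                    (Y (ω i₂) - bh (X (ω i₂))) *
                    ((A (ω i₃) - ph (X (ω i₃))) *
                      (∑ a, ∑ c, z (X (ω i₃)) a * G⁻¹ a c * z (X (ω i₄)) c) *
                      (A (ω i₄) - ph (X (ω i₄))))
                else 0)
            ∂(Measure.pi fun _ : Fin n => P))
          = ‖(K.orthogonalProjectionOnto (MemLp.toLp _ hfb) : Lp ℝ 2 (P.map X))‖ ^ 2 *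
              ‖(K.orthogonalProjectionOnto (MemLp.toLp _ hfp) : Lp ℝ 2 (P.map X))‖ ^ 2 := by
  subst hK
  set e : Fin k → Lp ℝ 2 (P.map X) := fun j => (hzL j).toLp _
  have hGram : G = Matrix.gram ℝ e := Matrix.ext fun i j => by
    rw [hG, Matrix.gram_apply, inner_toLp_map_eq_integral hX.aemeasurable]
  have hεb : ∀ a, Integrable (fun ω => ((Y ω - bh (X ω)) • z (X ω)) a) P := fun a =>
    integrable_sub_mul_of_abs_le hX hY hbh (hz a) hYb hbhB (fun s => hzB s a)
  have hεp : ∀ a, Integrable (fun ω => ((A ω - ph (X ω)) • z (X ω)) a) P := fun a =>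
    integrable_sub_mul_of_abs_le hX hA hph (hz a) hAb hphB (fun s => hzB s a)
  have hmean_b : (fun a => inner ℝ (hfb.toLp _) (e a))
      = fun a => ∫ ω, ((Y ω - bh (X ω)) • z (X ω)) a ∂P := funext fun a =>
    (integral_sub_mul_eq_inner_toLp hX hY hbh (hz a) hYb hbhB (fun s => hzB s a) hbX hfb
      (hzL a)).symm
  have hmean_p : (fun a => inner ℝ (hfp.toLp _) (e a))
      = fun a => ∫ ω, ((A ω - ph (X ω)) • z (X ω)) a ∂P := funext fun a =>
    (integral_sub_mul_eq_inner_toLp hX hA hph (hz a) hAb hphB (fun s => hzB s a) hpX hfp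
      (hzL a)).symm
  rw [norm_orthogonalProjectionOnto_span_sq e (hGram ▸ hGinv),
    norm_orthogonalProjectionOnto_span_sq e (hGram ▸ hGinv), ← hGram, hmean_b, hmean_p,
    ← (integrable_and_integral_pi_dotProduct_mulVec_mul P hεb hεp G⁻¹ G⁻¹).2]
  simp only [← smul_dotProduct_mulVec_smul, true_and]
  -- the U-statistic lemma applies up to unfolding `ω ∘ ![i₁, i₂, i₃, i₄]`
  exact fun n hn => integral_uStatistic_fin_four P
    (integrable_and_integral_pi_dotProduct_mulVec_mul P hεb hεp G⁻¹ G⁻¹).1 hn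

/-- Unbiasedness of the fourth-order influence function statistic (Theorem `thm:foif`(i)):
with `ε_{b,i} = Yᵢ - b̂(Xᵢ)`, `ε_{p,i} = Aᵢ - p̂(Xᵢ)` and i.i.d. copies,
`E[ε_{b,1} z̄(X₁)ᵀΩ⁻¹z̄(X₂) ε_{b,2} · ε_{p,3} z̄(X₃)ᵀΩ⁻¹z̄(X₄) ε_{p,4}]
  = ‖Π(b - b̂)‖² ‖Π(p - p̂)‖²` (projection in `L²(law of X)` onto the span of the basis),
and consequently the fourth-order U-statistic `ÎF₄₄` over `n ≥ 4` i.i.d. copies is unbiased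
for `‖Π(b - b̂)‖² ‖Π(p - p̂)‖²`. -/
theorem stmt12 {Ω S : Type*} [MeasurableSpace Ω] [MeasurableSpace S]
    (P : Measure Ω) [IsProbabilityMeasure P]
    (X : Ω → S) (hX : Measurable X)
    (Y A : Ω → ℝ) (hY : Measurable Y) (hA : Measurable A)
    (C : ℝ) (hYb : ∀ ω, |Y ω| ≤ C) (hAb : ∀ ω, |A ω| ≤ C)
    (b p bh ph : S → ℝ) (hb : Measurable b) (hp : Measurable p)
    (hbh : Measurable bh) (hph : Measurable ph)
    (hbhB : ∀ s, |bh s| ≤ C) (hphB : ∀ s, |ph s| ≤ C)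
    (hbX : (fun ω => b (X ω)) =ᵐ[P] P[Y | MeasurableSpace.comap X inferInstance])
    (hpX : (fun ω => p (X ω)) =ᵐ[P] P[A | MeasurableSpace.comap X inferInstance])
    {k : ℕ} (z : S → Fin k → ℝ) (hz : ∀ j, Measurable fun s => z s j)
    (hzB : ∀ s j, |z s j| ≤ C)
    (G : Matrix (Fin k) (Fin k) ℝ)
    (hG : ∀ i j, G i j = ∫ ω, z (X ω) i * z (X ω) j ∂P)
    (hGinv : IsUnit G)
    (hfb : MemLp (fun s => b s - bh s) 2 (P.map X))
    (hfp : MemLp (fun s => p s - ph s) 2 (P.map X))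
    (hzL : ∀ j, MemLp (fun s => z s j) 2 (P.map X))
    (K : Submodule ℝ (Lp ℝ 2 (P.map X)))
    (hK : K = Submodule.span ℝ (Set.range fun j : Fin k => MemLp.toLp _ (hzL j)))
    [K.HasOrthogonalProjection] :
    ((∫ ω : Fin 4 → Ω,
        (Y (ω 0) - bh (X (ω 0))) *
          (∑ a, ∑ c, z (X (ω 0)) a * G⁻¹ a c * z (X (ω 1)) c) *
          (Y (ω 1) - bh (X (ω 1))) *
          ((A (ω 2) - ph (X (ω 2))) *
            (∑ a, ∑ c, z (X (ω 2)) a * G⁻¹ a c * z (X (ω 3)) c) *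
            (A (ω 3) - ph (X (ω 3))))
        ∂(Measure.pi fun _ : Fin 4 => P))
      = ‖(K.orthogonalProjectionOnto (MemLp.toLp _ hfb) : Lp ℝ 2 (P.map X))‖ ^ 2 *
          ‖(K.orthogonalProjectionOnto (MemLp.toLp _ hfp) : Lp ℝ 2 (P.map X))‖ ^ 2)
    ∧ ∀ n : ℕ, 4 ≤ n →
        (∫ ω : Fin n → Ω,
            ((Nat.factorial (n - 4) : ℝ) / (Nat.factorial n : ℝ)) *
              ∑ i₁ : Fin n, ∑ i₂ : Fin n, ∑ i₃ : Fin n, ∑ i₄ : Fin n,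
                (if i₁ ≠ i₂ ∧ i₁ ≠ i₃ ∧ i₁ ≠ i₄ ∧ i₂ ≠ i₃ ∧ i₂ ≠ i₄ ∧ i₃ ≠ i₄ then
                  (Y (ω i₁) - bh (X (ω i₁))) *
                    (∑ a, ∑ c, z (X (ω i₁)) a * G⁻¹ a c * z (X (ω i₂)) c) *
                    (Y (ω i₂) - bh (X (ω i₂))) *
                    ((A (ω i₃) - ph (X (ω i₃))) *
                      (∑ a, ∑ c, z (X (ω i₃)) a * G⁻¹ a c * z (X (ω i₄)) c) *
                      (A (ω i₄) - ph (X (ω i₄))))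
                else 0)
            ∂(Measure.pi fun _ : Fin n => P))
          = ‖(K.orthogonalProjectionOnto (MemLp.toLp _ hfb) : Lp ℝ 2 (P.map X))‖ ^ 2 *
              ‖(K.orthogonalProjectionOnto (MemLp.toLp _ hfp) : Lp ℝ 2 (P.map X))‖ ^ 2 :=
  stmt12_general P X hX Y A hY hA C hYb hAb b p bh ph hbh hph hbhB hphB hbX hpX z hz hzB G hG hGinv
    hfb hfp hzL K hK
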